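/- The 5-element semigroup C_λ = ⟨x, y | x² = x³, xy = x, x²y = 0, y² = 0⟩ satisfies a semigroup identity u ≈ v if and only if: C(u) = C(v); Occ(h(u),u) = 1 iff Occ(h(v),v) = 1; if Occ(h(u),u) = 1 then h(u) = h(v); Occ(h₂(u),u) = 1 iff Occ(h₂(v),v) = 1; and if Occ(h₂(u),u) = 1 then h(u) = h(v) and h₂(u) = h₂(v). -/

import Mathlib

/-- Evaluation of the nonempty word `x :: w` under the substitution `φ`. -/
def evalWord {X S : Type*} [Mul S] (φ : X → S) : X → List X → S
  | x, [] => φ x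
  | x, y :: l => φ x * evalWord φ y l

/-- The 5-element semigroup C_λ = ⟨x, y | x² = x³, xy = x, x²y = 0, y² = 0⟩,
with elements x, x², y, xy, 0. -/
inductive CL : Type | x | x2 | y | xy | zero

def CL.mul : CL → CL → CL
  | .x, .x => .x2
  | .x, .x2 => .x2
  | .x, .y => .xy
  | .x2, .x => .x2
  | .x2, .x2 => .x2
  | .y, .x => .y
  | .y, .x2 => .y
  | .xy, .x => .xy
  | .xy, .x2 => .xy
  | _, _ => .zero

instance : Semigroup CL where
  mul := CL.mul
  mul_assoc := by intro a b c; cases a <;> cases b <;> cases c <;> rfl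

/-!
The set `{x, x²}` is a subsemigroup of `C_λ` whose complement is an ideal, and multiplying
on the right by `x` or by `x²` has the same effect. Hence a word `a b u` of length at least
two evaluates to `φ(a) x²` when every letter after `a` is sent into `{x, x²}`, to `xy` when
`a ↦ x`, `b ↦ y` and every later letter is sent into `{x, x²}`, and to `0` otherwise. The
content, a simple first letter and a simple second letter are exactly what these three cases
can see, which gives `⇐`. For `⇒`, send all letters to `x²` except one letter to `0`, or the
first letter to `y`, or the first two letters to `x` and `y`.
-/

namespace CL

lemma mul_def (s t : CL) : s * t = CL.mul s t := rfl

def IsPowOfX (s : CL) : Prop := s = x ∨ s = x2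

lemma isPowOfX_mul_iff {s t : CL} : IsPowOfX (s * t) ↔ IsPowOfX s ∧ IsPowOfX t := by
  cases s <;> cases t <;> simp [IsPowOfX, mul_def, CL.mul]

lemma mul_eq_mul_x2 (s : CL) {t : CL} (ht : IsPowOfX t) : s * t = s * x2 := by
  rcases ht with rfl | rfl <;> cases s <;> rfl

lemma mul_x2_of_isPowOfX {s : CL} (hs : IsPowOfX s) : s * x2 = x2 := by
  rcases hs with rfl | rfl <;> rfl

lemma mul_eq_y_iff {s t : CL} : s * t = y ↔ s = y ∧ IsPowOfX t := by
  cases s <;> cases t <;> simp [IsPowOfX, mul_def, CL.mul]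

lemma eq_x_and_eq_y_of_mul_ne_zero {s t : CL} (h : s * t ≠ zero) (ht : ¬IsPowOfX t) :
    s = x ∧ t = y := by
  cases s <;> cases t <;> simp_all [IsPowOfX, mul_def, CL.mul]

lemma zero_mul (s : CL) : zero * s = zero := rfl

lemma mul_zero (s : CL) : s * zero = zero := by cases s <;> rfl

end CL

namespace List

variable {α : Type*} [DecidableEq α]

lemma count_cons_self_eq_one_iff {a : α} {l : List α} : (a :: l).count a = 1 ↔ a ∉ l := by
  rw [count_cons_self, Nat.add_eq_right, count_eq_zero]

lemma count_cons_cons_eq_one_iff {a b : α} {l : List α} :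
    (a :: b :: l).count b = 1 ↔ b ≠ a ∧ b ∉ l := by
  by_cases hba : b = a
  · subst hba
    simp
  · rw [count_cons_of_ne (Ne.symm hba), count_cons_self_eq_one_iff]
    exact ⟨fun h => ⟨hba, h⟩, And.right⟩

end List

section evalWord

variable {X : Type*} (φ : X → CL)

lemma evalWord_cons (a b : X) (l : List X) : evalWord φ a (b :: l) = φ a * evalWord φ b l := rfl

lemma evalWord_eq_zero_of_mem {a z : X} {l : List X} (hz : z ∈ a :: l) (h0 : φ z = .zero) :
    evalWord φ a l = .zero := by
  induction l generalizing a with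
  | nil =>
    rw [List.mem_singleton.1 hz] at h0
    exact h0
  | cons b l ih =>
    rw [evalWord_cons]
    rcases List.mem_cons.1 hz with rfl | hz
    · rw [h0, CL.zero_mul]
    · rw [ih hz, CL.mul_zero]

lemma isPowOfX_evalWord_iff {a : X} {l : List X} :
    (evalWord φ a l).IsPowOfX ↔ ∀ z ∈ a :: l, (φ z).IsPowOfX := by
  induction l generalizing a with
  | nil => simp [evalWord]
  | cons b l ih => rw [evalWord_cons, CL.isPowOfX_mul_iff, ih, List.forall_mem_cons (l := b :: l)]

lemma evalWord_eq_y_iff {a : X} {l : List X} :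
    evalWord φ a l = .y ↔ φ a = .y ∧ ∀ z ∈ l, (φ z).IsPowOfX := by
  cases l with
  | nil => simp [evalWord]
  | cons b l => rw [evalWord_cons, CL.mul_eq_y_iff, isPowOfX_evalWord_iff]

variable {φ} {a b : X} {u : List X}

lemma evalWord_cons_of_forall_isPowOfX (h : ∀ z ∈ b :: u, (φ z).IsPowOfX) :
    evalWord φ a (b :: u) = φ a * .x2 := by
  rw [evalWord_cons, CL.mul_eq_mul_x2 _ ((isPowOfX_evalWord_iff φ).2 h)]

lemma evalWord_cons_eq_x2 (h : ∀ z ∈ a :: b :: u, (φ z).IsPowOfX) :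
    evalWord φ a (b :: u) = .x2 := by
  rw [evalWord_cons_of_forall_isPowOfX (List.forall_mem_cons.1 h).2]
  exact CL.mul_x2_of_isPowOfX (h a List.mem_cons_self)

lemma evalWord_cons_eq_xy (ha : φ a = .x) (hb : φ b = .y) (hu : ∀ z ∈ u, (φ z).IsPowOfX) :
    evalWord φ a (b :: u) = .xy := by
  rw [evalWord_cons, ha, (evalWord_eq_y_iff φ).2 ⟨hb, hu⟩]
  rfl

lemma forall_isPowOfX_or_of_evalWord_ne_zero (h : evalWord φ a (b :: u) ≠ .zero) :
    (∀ z ∈ b :: u, (φ z).IsPowOfX) ∨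
      (φ a = .x ∧ φ b = .y ∧ ∀ z ∈ u, (φ z).IsPowOfX) := by
  rw [evalWord_cons] at h
  by_cases ht : (evalWord φ b u).IsPowOfX
  · exact .inl ((isPowOfX_evalWord_iff φ).1 ht)
  · obtain ⟨ha, hy⟩ := CL.eq_x_and_eq_y_of_mul_ne_zero h ht
    exact .inr ⟨ha, (evalWord_eq_y_iff φ).1 hy⟩

end evalWord

section criterion

variable {X : Type*} [DecidableEq X] {a b c d : X} {u v : List X}

/-- One half of the criterion: the conditions that let `c :: d :: v` copy every nonzero value
of `a :: b :: u`. -/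
structure CLHalfCriterion (a b : X) (u : List X) (c d : X) (v : List X) : Prop where
  subset : c :: d :: v ⊆ a :: b :: u
  head : (a :: b :: u).count a = 1 → c = a ∧ (c :: d :: v).count c = 1
  second : (a :: b :: u).count b = 1 → c = a ∧ d = b ∧ (c :: d :: v).count d = 1

theorem subset_of_forall_evalWord_eq
    (h : ∀ φ : X → CL, evalWord φ a (b :: u) = evalWord φ c (d :: v)) :
    c :: d :: v ⊆ a :: b :: u := by
  intro z hz
  by_contra hzw
  let φ : X → CL := fun t => if t = z then .zero else .x2
  have hx2 : evalWord φ a (b :: u) = .x2 := by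
    refine evalWord_cons_eq_x2 fun t ht => .inr ?_
    simp [φ, ne_of_mem_of_not_mem ht hzw]
  have h0 : evalWord φ c (d :: v) = .zero := evalWord_eq_zero_of_mem φ hz (by simp [φ])
  have hφ := h φ
  rw [hx2, h0] at hφ
  cases hφ

theorem head_of_forall_evalWord_eq
    (h : ∀ φ : X → CL, evalWord φ a (b :: u) = evalWord φ c (d :: v))
    (ha : (a :: b :: u).count a = 1) : c = a ∧ (c :: d :: v).count c = 1 := by
  rw [List.count_cons_self_eq_one_iff] at ha ⊢
  let φ : X → CL := fun t => if t = a then .y else .x2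
  have hy : evalWord φ a (b :: u) = .y :=
    (evalWord_eq_y_iff φ).2
      ⟨by simp [φ], fun t ht => .inr (by simp [φ, ne_of_mem_of_not_mem ht ha])⟩
  obtain ⟨hc, hdv⟩ := (evalWord_eq_y_iff φ).1 ((h φ).symm.trans hy)
  have hca : c = a := by
    by_contra hca
    simp [φ, hca] at hc
  refine ⟨hca, fun hmem => ?_⟩
  simpa [φ, hca, CL.IsPowOfX] using hdv c hmem

theorem second_of_forall_evalWord_eq
    (h : ∀ φ : X → CL, evalWord φ a (b :: u) = evalWord φ c (d :: v))
    (hb : (a :: b :: u).count b = 1) : c = a ∧ d = b ∧ (c :: d :: v).count d = 1 := by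
  rw [List.count_cons_cons_eq_one_iff] at hb ⊢
  obtain ⟨hba, hbu⟩ := hb
  let φ : X → CL := fun t => if t = b then .y else if t = a then .x else .x2
  have hxy : evalWord φ a (b :: u) = .xy :=
    evalWord_cons_eq_xy (by simp [φ, Ne.symm hba]) (by simp [φ]) fun t ht => by
      have htb := ne_of_mem_of_not_mem ht hbu
      by_cases hta : t = a <;> simp [φ, htb, hta, Ne.symm hba, CL.IsPowOfX]
  have hw : evalWord φ c (d :: v) = .xy := (h φ).symm.trans hxy
  have hne : evalWord φ c (d :: v) ≠ .zero := by simp [hw]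
  rcases forall_isPowOfX_or_of_evalWord_ne_zero hne with hdv | ⟨hc, hd, hv⟩
  · rw [evalWord_cons_of_forall_isPowOfX hdv] at hw
    simp only [φ] at hw
    split_ifs at hw <;> cases hw
  · have hdb : d = b := by
      by_contra hdb
      by_cases hda : d = a <;> simp [φ, hdb, hda, Ne.symm hba] at hd
    have hca : c = a := by
      by_contra hca
      by_cases hcb : c = b <;> simp [φ, hca, hcb] at hc
    subst hca hdb
    refine ⟨rfl, rfl, hba, fun hdv => ?_⟩
    simpa [φ, CL.IsPowOfX] using hv d hdv

theorem CLHalfCriterion.of_forall_evalWord_eq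
    (h : ∀ φ : X → CL, evalWord φ a (b :: u) = evalWord φ c (d :: v)) :
    CLHalfCriterion a b u c d v :=
  ⟨subset_of_forall_evalWord_eq h, head_of_forall_evalWord_eq h, second_of_forall_evalWord_eq h⟩

theorem CLHalfCriterion.evalWord_eq (H : CLHalfCriterion a b u c d v) {φ : X → CL}
    (hne : evalWord φ a (b :: u) ≠ .zero) : evalWord φ c (d :: v) = evalWord φ a (b :: u) := by
  rcases forall_isPowOfX_or_of_evalWord_ne_zero hne with hbu | ⟨ha, hb, hu⟩
  · by_cases ha : (φ a).IsPowOfX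
    · have hall := List.forall_mem_cons (p := fun z => (φ z).IsPowOfX) |>.2 ⟨ha, hbu⟩
      rw [evalWord_cons_eq_x2 hall, evalWord_cons_eq_x2 fun z hz => hall z (H.subset hz)]
    · have hau : a ∉ b :: u := fun hmem => ha (hbu a hmem)
      obtain ⟨rfl, hc⟩ := H.head (List.count_cons_self_eq_one_iff.2 hau)
      rw [List.count_cons_self_eq_one_iff] at hc
      have hdv : ∀ z ∈ d :: v, (φ z).IsPowOfX := fun z hz =>
        hbu z (List.mem_of_ne_of_mem (ne_of_mem_of_not_mem hz hc) (H.subset (.tail c hz)))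
      rw [evalWord_cons_of_forall_isPowOfX hbu, evalWord_cons_of_forall_isPowOfX hdv]
  · have hba : b ≠ a := fun hba => by rw [hba, ha] at hb; cases hb
    have hbu : b ∉ u := fun hmem => by simpa [hb, CL.IsPowOfX] using hu b hmem
    obtain ⟨rfl, rfl, hd⟩ := H.second (List.count_cons_cons_eq_one_iff.2 ⟨hba, hbu⟩)
    rw [List.count_cons_cons_eq_one_iff] at hd
    have hv : ∀ z ∈ v, (φ z).IsPowOfX := fun z hz => by
      rcases List.mem_cons.1 (H.subset (.tail c (.tail d hz))) with rfl | hz'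
      · exact .inl ha
      · exact hu z (List.mem_of_ne_of_mem (ne_of_mem_of_not_mem hz hd.2) hz')
    rw [evalWord_cons_eq_xy ha hb hu, evalWord_cons_eq_xy ha hb hv]

theorem forall_evalWord_eq_iff :
    (∀ φ : X → CL, evalWord φ a (b :: u) = evalWord φ c (d :: v)) ↔
      CLHalfCriterion a b u c d v ∧ CLHalfCriterion c d v a b u := by
  constructor
  · exact fun h => ⟨.of_forall_evalWord_eq h, .of_forall_evalWord_eq fun φ => (h φ).symm⟩
  rintro ⟨H, H'⟩ φ
  by_cases hw : evalWord φ a (b :: u) = .zero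
  · by_cases hw' : evalWord φ c (d :: v) = .zero
    · rw [hw, hw']
    · exact H'.evalWord_eq hw'
  · exact (H.evalWord_eq hw).symm

end criterion

/-- C_λ satisfies the identity `a :: b :: u ≈ c :: d :: v` iff the contents coincide,
the heads are simultaneously simple (and then equal), and the second letters are
simultaneously simple (and then the first two letters of both sides coincide). -/
theorem CL_satisfies_iff {X : Type*} [DecidableEq X]
    (a b c d : X) (u v : List X) :
    (∀ φ : X → CL, evalWord φ a (b :: u) = evalWord φ c (d :: v)) ↔
      ((∀ z : X, z ∈ a :: b :: u ↔ z ∈ c :: d :: v) ∧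
        ((a :: b :: u).count a = 1 ↔ (c :: d :: v).count c = 1) ∧
        ((a :: b :: u).count a = 1 → a = c) ∧
        ((a :: b :: u).count b = 1 ↔ (c :: d :: v).count d = 1) ∧
        ((a :: b :: u).count b = 1 → a = c ∧ b = d)) := by
  rw [forall_evalWord_eq_iff]
  constructor
  · rintro ⟨H, H'⟩
    exact ⟨fun z => ⟨(H'.subset ·), (H.subset ·)⟩,
      ⟨fun h => (H.head h).2, fun h => (H'.head h).2⟩, fun h => (H.head h).1.symm,
      ⟨fun h => (H.second h).2.2, fun h => (H'.second h).2.2⟩,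
      fun h => ⟨(H.second h).1.symm, (H.second h).2.1.symm⟩⟩
  · rintro ⟨hmem, hhead, hhead_eq, hsecond, hsecond_eq⟩
    refine ⟨⟨fun z hz => (hmem z).2 hz, fun h => ⟨(hhead_eq h).symm, hhead.1 h⟩,
      fun h => ⟨(hsecond_eq h).1.symm, (hsecond_eq h).2.symm, hsecond.1 h⟩⟩,
      ⟨fun z hz => (hmem z).1 hz, fun h => ⟨hhead_eq (hhead.2 h), hhead.2 h⟩,
      fun h => ⟨(hsecond_eq (hsecond.2 h)).1, (hsecond_eq (hsecond.2 h)).2, hsecond.2 h⟩⟩⟩
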